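/- For h > 0: I_{0,5}(h) = (5/8) h^2 I_{0,1}(h) - (5/12) h r^7 - (1/3) r^{11}, where r = sqrt((sqrt(1+4h)-1)/2) and I_{0,j}(h) = 2∫_r^{√h} (h-x^2)^{j/2} dx. -/

import Mathlib

/-!
With `s = √(h - x²)`, the function `x s⁵ / 6 + 5h x s³ / 24` has derivative `s⁵ - (5/8) h² s`
wherever `x² < h` (use `x² = h - s²` to cancel the `s³` terms). It vanishes at `x = √h`, and at
`x = r` the relation `h - r² = r⁴` gives `s = r²`, so the boundary term is `r¹¹/6 + 5h r⁷/24`.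
-/

open Real intervalIntegral

noncomputable def sqrtPowFivePrimitive (h x : ℝ) : ℝ :=
  x * √(h - x ^ 2) ^ 5 / 6 + 5 * h / 24 * x * √(h - x ^ 2) ^ 3

lemma hasDerivAt_sqrtPowFivePrimitive {h x : ℝ} (hx : x ^ 2 < h) :
    HasDerivAt (sqrtPowFivePrimitive h)
      (√(h - x ^ 2) ^ 5 - 5 / 8 * h ^ 2 * √(h - x ^ 2)) x := by
  have hu : 0 < h - x ^ 2 := by linarith
  have hs2 : √(h - x ^ 2) ^ 2 = h - x ^ 2 := Real.sq_sqrt hu.le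
  have ds : HasDerivAt (fun y => √(h - y ^ 2)) (-(2 * x) / (2 * √(h - x ^ 2))) x := by
    refine HasDerivAt.sqrt ?_ hu.ne'
    simpa using (hasDerivAt_pow 2 x).const_sub h
  have dF := (((hasDerivAt_id' x).fun_mul (ds.fun_pow 5)).div_const 6).add
    (((hasDerivAt_id' x).const_mul (5 * h / 24)).fun_mul (ds.fun_pow 3))
  refine dF.congr_deriv ?_
  field_simp
  linear_combination (-960 * √(h - x ^ 2) ^ 4 - 720 * h * √(h - x ^ 2) ^ 2) * hs2

lemma integral_sqrt_sub_sq_pow_five {h a b : ℝ} (hh : 0 ≤ h) (hab : a ≤ b)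
    (ha : -√h ≤ a) (hb : b ≤ √h) :
    ∫ x in a..b, √(h - x ^ 2) ^ 5 =
      5 / 8 * h ^ 2 * (∫ x in a..b, √(h - x ^ 2)) +
        (sqrtPowFivePrimitive h b - sqrtPowFivePrimitive h a) := by
  have hcont : Continuous fun x => √(h - x ^ 2) := by fun_prop
  have hcont5 : Continuous fun x => √(h - x ^ 2) ^ 5 := by fun_prop
  have hFTC := integral_eq_sub_of_hasDerivAt_of_le hab
    (by unfold sqrtPowFivePrimitive; fun_prop)
    (fun x hx => hasDerivAt_sqrtPowFivePrimitive (by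
      rw [← Real.sq_sqrt hh]
      exact sq_lt_sq' (by linarith [hx.1]) (by linarith [hx.2])))
    ((hcont5.sub (hcont.const_mul _)).intervalIntegrable a b)
  rw [integral_sub (hcont5.intervalIntegrable a b)
    ((hcont.const_mul _).intervalIntegrable a b), integral_const_mul] at hFTC
  linarith

lemma sqrtPowFivePrimitive_sqrt {h : ℝ} (hh : 0 ≤ h) : sqrtPowFivePrimitive h √h = 0 := by
  simp [sqrtPowFivePrimitive, Real.sq_sqrt hh]

lemma sqrtPowFivePrimitive_of_sq_add_pow_four_eq {h r : ℝ} (hr : r ^ 2 + r ^ 4 = h) :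
    sqrtPowFivePrimitive h r = r ^ 11 / 6 + 5 * h / 24 * r ^ 7 := by
  have hs : √(h - r ^ 2) = r ^ 2 := by
    rw [show h - r ^ 2 = (r ^ 2) ^ 2 by linarith, Real.sqrt_sq (sq_nonneg r)]
  rw [sqrtPowFivePrimitive, hs]
  ring

lemma sq_add_pow_four_eq_of_eq_sqrt {h r : ℝ} (hh : 0 ≤ h)
    (hr : r = √((√(1 + 4 * h) - 1) / 2)) : r ^ 2 + r ^ 4 = h := by
  have hq : √(1 + 4 * h) ^ 2 = 1 + 4 * h := Real.sq_sqrt (by linarith)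
  have hq1 : 1 ≤ √(1 + 4 * h) := Real.one_le_sqrt.mpr (by linarith)
  have hr2 : r ^ 2 = (√(1 + 4 * h) - 1) / 2 := hr ▸ Real.sq_sqrt (by linarith)
  rw [show r ^ 4 = (r ^ 2) ^ 2 by ring, hr2]
  linear_combination hq / 4

theorem stmt_7 (h : ℝ) (hh : 0 < h)
    (r : ℝ) (hr : r = Real.sqrt ((Real.sqrt (1 + 4 * h) - 1) / 2)) :
    (2 * ∫ x in r..(Real.sqrt h), Real.sqrt (h - x ^ 2) ^ 5) =
      (5 / 8) * h ^ 2 * (2 * ∫ x in r..(Real.sqrt h), Real.sqrt (h - x ^ 2)) -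
        (5 / 12) * h * r ^ 7 - (1 / 3) * r ^ 11 := by
  have hrh : r ^ 2 + r ^ 4 = h := sq_add_pow_four_eq_of_eq_sqrt hh.le hr
  have hr_abs : |r| ≤ √h := Real.abs_le_sqrt (by linarith [pow_two_nonneg (r ^ 2)])
  obtain ⟨hr_ge, hr_le⟩ := abs_le.mp hr_abs
  rw [integral_sqrt_sub_sq_pow_five hh.le hr_le hr_ge le_rfl,
    sqrtPowFivePrimitive_sqrt hh.le, sqrtPowFivePrimitive_of_sq_add_pow_four_eq hrh]
  ring
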